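/- arXiv:1504.04318 — 2 statements merged into one kernel-verified Lean document; each statement's English description precedes it below -/
import Mathlib

section
/- Consider the model x_i(m+1) = x_i(m) e^{-a_i(m)h} + θ_i(m)[Σ_{j=1}^N b_{ij}(m) f_j(x_j(m-τ(m))) + I_i(m)] with bounded coefficients, a_i(m) > 0, θ_i(m) = (1−e^{-a_i(m)h})/a_i(m), and f_j Lipschitz with constant F_j > 0. Define the N×N matrix M = diag(a_1^-,…,a_N^-) − [b_{ij}^+ F_j], where a_i^- = inf_m a_i(m) and b_{ij}^+ = sup_m |b_{ij}(m)|. If M is an M-matrix, then the model is globally exponentially stable: there exist μ > 0 and C > 1 such that ‖x̄_m(·,n,ᾱ) − x̄_m(·,n,ᾱ*)‖ ≤ C e^{-μ(m-n)} ‖ᾱ − ᾱ*‖ for all initial segments ᾱ, ᾱ* and all m ≥ n ≥ 0. -/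
/-- The norm of the segment of `u` at time `m`, with maximum delay `τ`. -/
noncomputable def segNorm {N : ℕ} (τ : ℕ) (u : ℤ → Fin N → ℝ) (m : ℤ) : ℝ :=
  (Finset.Icc (m - τ) m).sup' (Finset.nonempty_Icc.mpr (by omega)) fun k => ‖u k‖

/-- A square real matrix is an M-matrix if its off-diagonal entries are nonpositive
and all of its (complex) eigenvalues have positive real part. -/
def IsMMatrix {N : ℕ} (M : Matrix (Fin N) (Fin N) ℝ) : Prop :=
  (∀ i j, i ≠ j → M i j ≤ 0) ∧
  ∀ z ∈ spectrum ℂ (M.map (Complex.ofReal)), 0 < z.re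

/-! The M-matrix condition yields a vector `ξ > 0` with `M ξ > 0`: for small `ε > 0` the
matrix `T = 1 - ε M` is entrywise nonnegative with spectrum inside the unit disc, so by Gelfand's
formula some power `T ^ k` has `ℓ∞`-operator norm `< 1`, and `ξ = (1 + T + ⋯ + T ^ (k - 1)) 1`
works since `ε M ξ = 1 - T ^ k 1`. The difference `z = x - y` of two solutions satisfies
`|z_i (m+1)| ≤ e^{-a_i h} |z_i m| + θ_i ∑_j b⁺_ij F_j |z_j (m - τ m)|`, and the slack in
`M ξ > 0` leaves room for a rate `ρ < 1` so close to `1` that the weighted bound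
`|z_i k| ≤ K ξ_i ρ^(k-n)` propagates by induction in spite of the delay. -/

open Filter Topology Finset Matrix Complex

theorem exists_norm_pow_lt_one_of_forall_mem_spectrum {A : Type*} [NormedRing A]
    [NormedAlgebra ℂ A] [CompleteSpace A] [Nontrivial A] (a : A)
    (h : ∀ z ∈ spectrum ℂ a, ‖z‖ < 1) :
    ∃ n, 0 < n ∧ ‖a ^ n‖ < 1 := by
  have hρ : spectralRadius ℂ a < (1 : NNReal) :=
    spectrum.spectralRadius_lt_of_forall_lt_of_nonempty (spectrum.nonempty a)
      fun z hz => by exact_mod_cast h z hz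
  obtain ⟨n, hlt, hn⟩ :=
    (((spectrum.pow_nnnorm_pow_one_div_tendsto_nhds_spectralRadius a).eventually
      (gt_mem_nhds hρ)).and (eventually_gt_atTop 0)).exists
  refine ⟨n, hn, ?_⟩
  by_contra! hge
  have : (1 : ENNReal) ≤ (‖a ^ n‖₊ : ENNReal) ^ (1 / n : ℝ) :=
    ENNReal.one_le_rpow (by exact_mod_cast hge) (by positivity)
  exact absurd hlt (by simpa using this)

theorem Complex.eventually_norm_one_sub_mul_lt_one {z : ℂ} (hz : 0 < z.re) :
    ∀ᶠ ε : ℝ in 𝓝[>] 0, ‖1 - ε * z‖ < 1 := by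
  have hsq : 0 < normSq z := normSq_pos.2 fun h => by simp [h] at hz
  filter_upwards [Ioo_mem_nhdsGT (div_pos hz hsq)] with ε ⟨hε, hεc⟩
  rw [lt_div_iff₀ hsq, normSq_apply] at hεc
  have : normSq (1 - ε * z) < 1 := by
    simp only [normSq_apply, sub_re, one_re, mul_re, ofReal_re, ofReal_im, sub_im, one_im, mul_im]
    nlinarith
  rwa [← sq_lt_one_iff₀ (norm_nonneg _), ← normSq_eq_norm_sq]

namespace Matrix

variable {n : Type*} [Fintype n]

lemma mulVec_nonneg {T : Matrix n n ℝ} (hT : ∀ i j, 0 ≤ T i j) {v : n → ℝ} (hv : 0 ≤ v) :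
    0 ≤ T *ᵥ v :=
  fun i => Finset.sum_nonneg fun j _ => mul_nonneg (hT i j) (hv j)

lemma pow_mulVec_nonneg [DecidableEq n] {T : Matrix n n ℝ} (hT : ∀ i j, 0 ≤ T i j) {v : n → ℝ}
    (hv : 0 ≤ v) (k : ℕ) : 0 ≤ T ^ k *ᵥ v := by
  induction k with
  | zero => simpa
  | succ k ih => rw [pow_succ', ← mulVec_mulVec]; exact mulVec_nonneg hT ih

lemma eventually_one_sub_smul_apply_nonneg [DecidableEq n] {M : Matrix n n ℝ}
    (hoff : ∀ i j, i ≠ j → M i j ≤ 0) :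
    ∀ᶠ ε in 𝓝[>] (0 : ℝ), ∀ i j, 0 ≤ (1 - ε • M) i j := by
  refine eventually_all.2 fun i => eventually_all.2 fun j => ?_
  by_cases hij : i = j
  · subst hij
    have : Tendsto (fun ε : ℝ => ε * M i i) (𝓝[>] 0) (𝓝 0) :=
      (Continuous.tendsto' (by fun_prop) 0 0 (by simp)).mono_left nhdsWithin_le_nhds
    filter_upwards [this.eventually (eventually_le_nhds one_pos)] with ε hε
    simpa using hε
  · filter_upwards [self_mem_nhdsWithin] with ε (hε : 0 < ε)
    simpa [one_apply_ne hij] using mul_nonpos_of_nonneg_of_nonpos hε.le (hoff i j hij)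

lemma norm_lt_one_of_mem_spectrum_one_sub_smul [DecidableEq n] {M : Matrix n n ℝ} {ε : ℝ}
    (hε : 0 < ε) (hM : ∀ z ∈ spectrum ℂ (M.map ofReal), ‖1 - ε * z‖ < 1) :
    ∀ z ∈ spectrum ℂ ((1 - ε • M).map ofReal), ‖z‖ < 1 := by
  have hε0 : (ε : ℂ) ≠ 0 := ofReal_ne_zero.2 hε.ne'
  have hmap : (1 - ε • M).map ofReal = algebraMap ℂ _ 1 - Units.mk0 (ε : ℂ) hε0 • M.map ofReal := by
    ext i j
    by_cases hij : i = j <;> simp [hij, one_apply_ne, Units.smul_def]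
  rw [hmap, ← spectrum.singleton_sub_eq, spectrum.unit_smul_eq_smul]
  rintro _ ⟨_, rfl, _, ⟨w, hw, rfl⟩, rfl⟩
  simpa [Units.smul_def] using hM w hw

section LinftyOpNorm

attribute [local instance] Matrix.linftyOpNormedRing Matrix.linftyOpNormedAlgebra

lemma mulVec_one_apply_lt_one_of_norm_map_lt_one [DecidableEq n] (B : Matrix n n ℝ)
    (hB : ‖B.map ofReal‖ < 1) (i : n) :
    (B *ᵥ 1) i < 1 := by
  have hmap : ((B *ᵥ 1) i : ℂ) = (B.map ofReal *ᵥ 1) i := by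
    simp [mulVec, dotProduct]
  calc (B *ᵥ 1) i ≤ ‖((B *ᵥ 1) i : ℂ)‖ := by rw [norm_real]; exact le_abs_self _
    _ = ‖(B.map ofReal *ᵥ 1) i‖ := by rw [hmap]
    _ ≤ ‖B.map ofReal *ᵥ 1‖ := norm_le_pi_norm _ i
    _ ≤ ‖B.map ofReal‖ * ‖(1 : n → ℂ)‖ := linfty_opNorm_mulVec _ _
    _ ≤ ‖B.map ofReal‖ :=
        mul_le_of_le_one_right (norm_nonneg _)
          ((pi_norm_le_iff_of_nonneg zero_le_one).2 fun _ => by simp)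
    _ < 1 := hB

lemma exists_pos_one_sub_mulVec_pos [DecidableEq n] {T : Matrix n n ℝ} (hT : ∀ i j, 0 ≤ T i j)
    {k : ℕ} (hk : 0 < k) (hnorm : ‖(T ^ k).map ofReal‖ < 1) :
    ∃ ξ : n → ℝ, (∀ i, 0 < ξ i) ∧ ∀ i, 0 < ((1 - T) *ᵥ ξ) i := by
  refine ⟨(∑ j ∈ range k, T ^ j) *ᵥ 1, fun i => ?_, fun i => ?_⟩
  · rw [sum_mulVec, Finset.sum_apply]
    calc (0 : ℝ) < (T ^ 0 *ᵥ 1) i := by simp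
      _ ≤ ∑ j ∈ range k, (T ^ j *ᵥ 1) i :=
          single_le_sum (fun j _ => pow_mulVec_nonneg hT zero_le_one j i) (mem_range.2 hk)
  · rw [mulVec_mulVec, mul_neg_geom_sum, sub_mulVec, one_mulVec, Pi.sub_apply, Pi.one_apply,
      sub_pos]
    exact mulVec_one_apply_lt_one_of_norm_map_lt_one _ hnorm i

theorem exists_pos_mulVec_pos_of_spectrum [DecidableEq n] (M : Matrix n n ℝ)
    (hoff : ∀ i j, i ≠ j → M i j ≤ 0)
    (hspec : ∀ z ∈ spectrum ℂ (M.map ofReal), 0 < z.re) :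
    ∃ ξ : n → ℝ, (∀ i, 0 < ξ i) ∧ ∀ i, 0 < (M *ᵥ ξ) i := by
  cases isEmpty_or_nonempty n with
  | inl _ => exact ⟨0, isEmptyElim, isEmptyElim⟩
  | inr _ =>
  obtain ⟨ε, ⟨hT, hball⟩, hε⟩ := ((eventually_one_sub_smul_apply_nonneg hoff).and
    ((M.map ofReal).finite_spectrum.eventually_all.2 fun z hz =>
      eventually_norm_one_sub_mul_lt_one (hspec z hz))).and self_mem_nhdsWithin |>.exists
  obtain ⟨k, hk, hnorm⟩ := exists_norm_pow_lt_one_of_forall_mem_spectrum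
    ((1 - ε • M).map ofReal) (norm_lt_one_of_mem_spectrum_one_sub_smul hε hball)
  rw [← show ((1 - ε • M) ^ k).map ofReal = (1 - ε • M).map ofReal ^ k from
    Matrix.map_pow _ ofRealHom k] at hnorm
  obtain ⟨ξ, hξ, hTξ⟩ := exists_pos_one_sub_mulVec_pos hT hk hnorm
  refine ⟨ξ, hξ, fun i => pos_of_mul_pos_right (a := ε) ?_ hε.le⟩
  simpa [smul_mulVec] using hTξ i

end LinftyOpNorm

end Matrix

theorem IsMMatrix.exists_pos_mulVec_pos {N : ℕ} {M : Matrix (Fin N) (Fin N) ℝ}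
    (hM : IsMMatrix M) : ∃ ξ : Fin N → ℝ, (∀ i, 0 < ξ i) ∧ ∀ i, 0 < (M *ᵥ ξ) i :=
  M.exists_pos_mulVec_pos_of_spectrum hM.1 hM.2

theorem one_sub_exp_neg_mul_div_nonneg {α : ℝ} (hα : 0 < α) {h : ℝ} (hh : 0 ≤ h) :
    0 ≤ (1 - Real.exp (-α * h)) / α :=
  div_nonneg (sub_nonneg.2 (Real.exp_le_one_iff.2 (by nlinarith))) hα.le

theorem one_sub_exp_neg_mul_div_le {α A : ℝ} (hα : 0 < α) (hαA : α ≤ A) (h : ℝ) :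
    (1 - Real.exp (-A * h)) / A ≤ (1 - Real.exp (-α * h)) / α := by
  have hA : 0 < A := hα.trans_le hαA
  -- convexity of `exp` between `-A * h` and `0`, evaluated at `-α * h`
  have hconv := convexOn_exp.2 (Set.mem_univ (-A * h)) (Set.mem_univ 0)
    (div_pos hα hA).le (sub_nonneg.2 ((div_le_one hA).2 hαA)) (add_sub_cancel _ _)
  simp only [smul_eq_mul, mul_zero, add_zero, Real.exp_zero, mul_one] at hconv
  rw [show α / A * (-A * h) = -α * h by field_simp] at hconv
  rw [div_le_div_iff₀ hA hα]
  have := mul_le_mul_of_nonneg_right hconv hA.le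
  rw [show (α / A * Real.exp (-A * h) + (1 - α / A)) * A = α * Real.exp (-A * h) + A - α by
    field_simp; ring] at this
  linarith

theorem exists_contraction_rate {ι : Type*} [Finite ι] {h : ℝ} (hh : 0 < h)
    (a : ℤ → ι → ℝ) (ha : ∀ m i, 0 < a m i) {A : ℝ} (hA : ∀ m i, a m i ≤ A)
    (aminus : ι → ℝ) (haminus : ∀ m i, aminus i ≤ a m i)
    (ξ B : ι → ℝ) (hξ : ∀ i, 0 ≤ ξ i) (hB : ∀ i, B i < aminus i * ξ i) (τ : ℕ) :
    ∃ ρ, 0 < ρ ∧ ρ < 1 ∧ ∀ m i, Real.exp (-(a m i) * h) * ξ i +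
      (1 - Real.exp (-(a m i) * h)) / a m i * ρ ^ (-τ : ℤ) * B i ≤ ρ * ξ i := by
  have hdefect : Tendsto (fun ρ : ℝ => (1 - ρ) + (ρ ^ (-τ : ℤ) - 1)) (𝓝[<] 1) (𝓝 0) := by
    have : ContinuousAt (fun ρ : ℝ => (1 - ρ) + (ρ ^ (-τ : ℤ) - 1)) 1 :=
      (continuousAt_const.sub continuousAt_id).add
        ((continuousAt_zpow₀ 1 _ (Or.inl one_ne_zero)).sub continuousAt_const)
    simpa using this.tendsto.mono_left nhdsWithin_le_nhds
  have hsmall : ∀ᶠ ρ in 𝓝[<] 1, ∀ i, ((1 - ρ) + (ρ ^ (-τ : ℤ) - 1)) * ξ i ≤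
      (1 - Real.exp (-A * h)) / A * (aminus i * ξ i - B i) := by
    refine eventually_all.2 fun i => (hdefect.mul_const (ξ i)).eventually (eventually_le_nhds ?_)
    have hA0 : 0 < A := (ha 0 i).trans_le (hA 0 i)
    have : Real.exp (-A * h) < 1 := Real.exp_lt_one_iff.2 (by nlinarith)
    rw [zero_mul]
    exact mul_pos (div_pos (by linarith) hA0) (by linarith [hB i])
  obtain ⟨ρ, hρ, hρ0, hρ1⟩ := (hsmall.and (Ioo_mem_nhdsLT zero_lt_one)).exists
  refine ⟨ρ, hρ0, hρ1, fun m i => ?_⟩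
  set E := Real.exp (-(a m i) * h)
  set θ := (1 - E) / a m i
  set L := ρ ^ (-τ : ℤ)
  have hθ : θ * a m i = 1 - E := div_mul_cancel₀ _ (ha m i).ne'
  have hθ₀ : (1 - Real.exp (-A * h)) / A ≤ θ := one_sub_exp_neg_mul_div_le (ha m i) (hA m i) h
  have hL : 1 ≤ L := one_le_zpow_of_nonpos₀ hρ0 hρ1.le (by omega)
  have hgap : 0 ≤ aminus i * ξ i - B i := by linarith [hB i]
  have hθ0 : 0 ≤ θ := one_sub_exp_neg_mul_div_nonneg (ha m i) hh.le
  have hθL : θ ≤ θ * L := le_mul_of_one_le_right hθ0 hL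
  calc E * ξ i + θ * L * B i
      ≤ E * ξ i + θ * L * (a m i * ξ i - (aminus i * ξ i - B i)) := by
        have := mul_le_mul_of_nonneg_right (haminus m i) (hξ i)
        gcongr
        linarith
    _ = E * ξ i + (1 - E) * L * ξ i - θ * L * (aminus i * ξ i - B i) := by
        rw [← hθ]; ring
    _ ≤ ξ i + (L - 1) * ξ i - (1 - Real.exp (-A * h)) / A * (aminus i * ξ i - B i) := by
        nlinarith [mul_nonneg (sub_nonneg.2 hL) (hξ i), Real.exp_pos (-(a m i) * h),
          mul_le_mul_of_nonneg_right (hθ₀.trans hθL) hgap]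
    _ ≤ ρ * ξ i := by linarith [hρ i]

theorem abs_sub_le_of_lipschitz {ι : Type*} [Fintype ι] {E θ : ℝ} (hE : 0 ≤ E) (hθ : 0 ≤ θ)
    (β B F : ι → ℝ) (hβ : ∀ j, |β j| ≤ B j) (f : ι → ℝ → ℝ)
    (hf : ∀ j u v, |f j u - f j v| ≤ F j * |u - v|) (x y c : ℝ) (xd yd : ι → ℝ) :
    |(x * E + θ * ((∑ j, β j * f j (xd j)) + c)) - (y * E + θ * ((∑ j, β j * f j (yd j)) + c))|
      ≤ E * |x - y| + θ * ∑ j, B j * F j * |xd j - yd j| := by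
  have hsum : |∑ j, β j * (f j (xd j) - f j (yd j))| ≤ ∑ j, B j * F j * |xd j - yd j| := by
    refine (abs_sum_le_sum_abs _ _).trans (sum_le_sum fun j _ => ?_)
    rw [abs_mul, mul_assoc]
    exact mul_le_mul (hβ j) (hf j _ _) (abs_nonneg _) ((abs_nonneg _).trans (hβ j))
  calc _ = |(x - y) * E + θ * ∑ j, β j * (f j (xd j) - f j (yd j))| := by
        simp only [mul_sub, sum_sub_distrib]; ring_nf
    _ ≤ E * |x - y| + θ * ∑ j, B j * F j * |xd j - yd j| := by
        refine (abs_add_le _ _).trans (add_le_add ?_ ?_)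
        · rw [abs_mul, abs_of_nonneg hE, mul_comm]
        · rw [abs_mul, abs_of_nonneg hθ]; exact mul_le_mul_of_nonneg_left hsum hθ

theorem le_mul_zpow_of_delay_recursion {ι : Type*} [Fintype ι] {τ : ℕ} (τd : ℤ → ℕ)
    (hτd : ∀ m, τd m ≤ τ) (E θ : ℤ → ι → ℝ) (hE : ∀ m i, 0 ≤ E m i) (hθ : ∀ m i, 0 ≤ θ m i)
    (P : Matrix ι ι ℝ) (hP : ∀ i j, 0 ≤ P i j) (ξ : ι → ℝ) (hξ : ∀ i, 0 ≤ ξ i)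
    {ρ : ℝ} (hρ0 : 0 < ρ) (hρ1 : ρ ≤ 1)
    (hrate : ∀ m i, E m i * ξ i + θ m i * ρ ^ (-τ : ℤ) * (P *ᵥ ξ) i ≤ ρ * ξ i)
    (u : ℤ → ι → ℝ) (n : ℤ) {K : ℝ} (hK : 0 ≤ K)
    (hrec : ∀ m, n ≤ m → ∀ i,
      u (m + 1) i ≤ E m i * u m i + θ m i * ∑ j, P i j * u (m - τd m) j)
    (hinit : ∀ k, n - τ ≤ k → k ≤ n → ∀ i, u k i ≤ K * ξ i) :
    ∀ k, n - τ ≤ k → ∀ i, u k i ≤ K * ξ i * ρ ^ (k - n) := by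
  suffices H : ∀ m, n ≤ m → ∀ k, n - τ ≤ k → k ≤ m → ∀ i, u k i ≤ K * ξ i * ρ ^ (k - n) from
    fun k hk => H (max k n) (le_max_right _ _) k hk (le_max_left _ _)
  intro m hm
  induction m, hm using Int.leInduction with
  | base =>
    intro k hk hkn i
    exact (hinit k hk hkn i).trans
      (le_mul_of_one_le_right (mul_nonneg hK (hξ i)) (one_le_zpow_of_nonpos₀ hρ0 hρ1 (by omega)))
  | succ m hm ih =>
    intro k hk hkm i
    rcases (Int.le_add_one_iff.1 hkm) with hkm | rfl
    · exact ih k hk hkm i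
    have hdelay : ∀ j, u (m - τd m) j ≤ K * ρ ^ (m - n) * ρ ^ (-τ : ℤ) * ξ j := fun j => by
      have hρ : ρ ^ (m - τd m - n) ≤ ρ ^ (m - n) * ρ ^ (-τ : ℤ) := by
        rw [← zpow_add₀ hρ0.ne']
        exact zpow_le_zpow_right_of_le_one₀ hρ0 hρ1 (by have := hτd m; omega)
      calc u (m - τd m) j ≤ K * ξ j * ρ ^ (m - τd m - n) :=
            ih _ (by have := hτd m; omega) (by omega) j
        _ ≤ K * ξ j * (ρ ^ (m - n) * ρ ^ (-τ : ℤ)) :=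
            mul_le_mul_of_nonneg_left hρ (mul_nonneg hK (hξ j))
        _ = _ := by ring
    have hKρ : 0 ≤ K * ρ ^ (m - n) := mul_nonneg hK (zpow_pos hρ0 _).le
    calc u (m + 1) i ≤ E m i * u m i + θ m i * ∑ j, P i j * u (m - τd m) j := hrec m hm i
      _ ≤ E m i * (K * ξ i * ρ ^ (m - n)) +
          θ m i * ∑ j, P i j * (K * ρ ^ (m - n) * ρ ^ (-τ : ℤ) * ξ j) := by
        gcongr with j
        · exact hE m i
        · exact ih m (by omega) le_rfl i
        · exact hθ m i
        · exact hP i j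
        · exact hdelay j
      _ = K * ρ ^ (m - n) * (E m i * ξ i + θ m i * ρ ^ (-τ : ℤ) * (P *ᵥ ξ) i) := by
        simp only [mulVec, dotProduct, mul_sum, mul_add]
        congr 1
        · ring
        · exact sum_congr rfl fun j _ => by ring
      _ ≤ K * ρ ^ (m - n) * (ρ * ξ i) := mul_le_mul_of_nonneg_left (hrate m i) hKρ
      _ = K * ξ i * ρ ^ (m + 1 - n) := by
        rw [show m + 1 - n = m - n + 1 by ring, zpow_add_one₀ hρ0.ne']; ring

theorem one_le_norm_inv_mul {ι : Type*} [Fintype ι] {ξ : ι → ℝ} (hξ : ∀ i, 0 < ξ i) (i : ι) :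
    1 ≤ ‖ξ⁻¹‖ * ξ i :=
  calc 1 = (ξ i)⁻¹ * ξ i := (inv_mul_cancel₀ (hξ i).ne').symm
    _ ≤ ‖ξ⁻¹‖ * ξ i :=
      mul_le_mul_of_nonneg_right ((le_abs_self _).trans (norm_le_pi_norm ξ⁻¹ i)) (hξ i).le

section Segment

variable {N τ : ℕ}

theorem norm_le_segNorm (u : ℤ → Fin N → ℝ) {m k : ℤ} (h₁ : m - τ ≤ k) (h₂ : k ≤ m) :
    ‖u k‖ ≤ segNorm τ u m :=
  le_sup' (fun k => ‖u k‖) (mem_Icc.2 ⟨h₁, h₂⟩)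

theorem segNorm_le (u : ℤ → Fin N → ℝ) (m : ℤ) {c : ℝ}
    (hc : ∀ k, m - τ ≤ k → k ≤ m → ‖u k‖ ≤ c) : segNorm τ u m ≤ c :=
  sup'_le _ _ fun k hk => hc k (mem_Icc.1 hk).1 (mem_Icc.1 hk).2

theorem segNorm_nonneg (u : ℤ → Fin N → ℝ) (m : ℤ) : 0 ≤ segNorm τ u m :=
  (norm_nonneg (u m)).trans (norm_le_segNorm u (by omega) le_rfl)

theorem segNorm_le_of_abs_le (u : ℤ → Fin N → ℝ) (ξ : Fin N → ℝ) {ρ : ℝ} (hρ0 : 0 < ρ)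
    (hρ1 : ρ ≤ 1) (n : ℤ) {K : ℝ} (hK : 0 ≤ K)
    (hu : ∀ k, n - τ ≤ k → ∀ i, |u k i| ≤ K * ξ i * ρ ^ (k - n)) {m : ℤ} (hm : n ≤ m) :
    segNorm τ u m ≤ K * ‖ξ‖ * ρ ^ (-τ : ℤ) * ρ ^ (m - n) := by
  have hC : 0 ≤ K * ‖ξ‖ * ρ ^ (-τ : ℤ) * ρ ^ (m - n) := by positivity
  refine segNorm_le u m fun k hk hkm => (pi_norm_le_iff_of_nonneg hC).2 fun i => ?_
  have hρ : ρ ^ (k - n) ≤ ρ ^ (-τ : ℤ) * ρ ^ (m - n) := by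
    rw [← zpow_add₀ hρ0.ne']
    exact zpow_le_zpow_right_of_le_one₀ hρ0 hρ1 (by omega)
  calc ‖u k i‖ ≤ K * ξ i * ρ ^ (k - n) := (Real.norm_eq_abs _).trans_le (hu k (by omega) i)
    _ ≤ K * ‖ξ‖ * (ρ ^ (-τ : ℤ) * ρ ^ (m - n)) := by
      gcongr
      exact (le_abs_self _).trans (norm_le_pi_norm ξ i)
    _ = _ := by ring

theorem segNorm_le_of_delay_recursion (τd : ℤ → ℕ) (hτd : ∀ m, τd m ≤ τ) (E θ : ℤ → Fin N → ℝ)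
    (hE : ∀ m i, 0 ≤ E m i) (hθ : ∀ m i, 0 ≤ θ m i) (P : Matrix (Fin N) (Fin N) ℝ)
    (hP : ∀ i j, 0 ≤ P i j) (ξ : Fin N → ℝ) (hξ : ∀ i, 0 < ξ i) {ρ : ℝ} (hρ0 : 0 < ρ)
    (hρ1 : ρ ≤ 1) (hrate : ∀ m i, E m i * ξ i + θ m i * ρ ^ (-τ : ℤ) * (P *ᵥ ξ) i ≤ ρ * ξ i)
    (z : ℤ → Fin N → ℝ) (n : ℤ)
    (hrec : ∀ m, n ≤ m → ∀ i,
      |z (m + 1) i| ≤ E m i * |z m i| + θ m i * ∑ j, P i j * |z (m - τd m) j|)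
    {m : ℤ} (hm : n ≤ m) :
    segNorm τ z m ≤ ‖ξ‖ * ‖ξ⁻¹‖ * ρ ^ (-τ : ℤ) * ρ ^ (m - n) * segNorm τ z n := by
  have hK : 0 ≤ segNorm τ z n * ‖ξ⁻¹‖ := mul_nonneg (segNorm_nonneg z n) (norm_nonneg _)
  have hinit : ∀ k, n - τ ≤ k → k ≤ n → ∀ i, |z k i| ≤ segNorm τ z n * ‖ξ⁻¹‖ * ξ i :=
    fun k hk hkn i => calc
      |z k i| ≤ segNorm τ z n := (norm_le_pi_norm (z k) i).trans (norm_le_segNorm z hk hkn)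
      _ ≤ segNorm τ z n * ‖ξ⁻¹‖ * ξ i := by
        rw [mul_assoc]
        exact le_mul_of_one_le_right (segNorm_nonneg z n) (one_le_norm_inv_mul hξ i)
  calc segNorm τ z m ≤ segNorm τ z n * ‖ξ⁻¹‖ * ‖ξ‖ * ρ ^ (-τ : ℤ) * ρ ^ (m - n) :=
        segNorm_le_of_abs_le z ξ hρ0 hρ1 n hK (le_mul_zpow_of_delay_recursion τd hτd E θ hE hθ
          P hP ξ (fun i => (hξ i).le) hρ0 hρ1 hrate (fun k i => |z k i|) n hK hrec hinit) hm
    _ = _ := by ring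

end Segment

theorem stmt4_general {N τ : ℕ} (h : ℝ) (hh : 0 < h)
    (a : ℤ → Fin N → ℝ) (b : ℤ → Fin N → Fin N → ℝ) (I : ℤ → Fin N → ℝ)
    (τd : ℤ → ℕ) (hτd : ∀ m, τd m ≤ τ)
    (f : Fin N → ℝ → ℝ) (F : Fin N → ℝ) (hF : ∀ j, 0 < F j)
    (hfLip : ∀ j u v, |f j u - f j v| ≤ F j * |u - v|)
    (ha_pos : ∀ m i, 0 < a m i)
    (haUB : ∃ A, ∀ m i, a m i ≤ A)
    (aminus : Fin N → ℝ) (bplus : Fin N → Fin N → ℝ)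
    (ha_inf : ∀ i, IsGLB (Set.range fun m => a m i) (aminus i))
    (hb_sup : ∀ i j, IsLUB (Set.range fun m => |b m i j|) (bplus i j))
    (hM : IsMMatrix (Matrix.diagonal aminus - Matrix.of fun i j => bplus i j * F j)) :
    ∃ μ > (0 : ℝ), ∃ C > (1 : ℝ), ∀ n : ℤ, 0 ≤ n → ∀ x y : ℤ → Fin N → ℝ,
      (∀ m, n ≤ m → ∀ i,
        x (m + 1) i = x m i * Real.exp (-(a m i) * h) +
          ((1 - Real.exp (-(a m i) * h)) / a m i) *
            ((∑ j, b m i j * f j (x (m - τd m) j)) + I m i)) →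
      (∀ m, n ≤ m → ∀ i,
        y (m + 1) i = y m i * Real.exp (-(a m i) * h) +
          ((1 - Real.exp (-(a m i) * h)) / a m i) *
            ((∑ j, b m i j * f j (y (m - τd m) j)) + I m i)) →
      ∀ m, n ≤ m →
        segNorm τ (fun k i => x k i - y k i) m ≤
          C * Real.exp (-μ * ((m : ℝ) - n)) * segNorm τ (fun k i => x k i - y k i) n := by
  set P : Matrix (Fin N) (Fin N) ℝ := of fun i j => bplus i j * F j
  have hbplus : ∀ m i j, |b m i j| ≤ bplus i j := fun m i j => (hb_sup i j).1 ⟨m, rfl⟩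
  have hP : ∀ i j, 0 ≤ P i j := fun i j =>
    mul_nonneg ((abs_nonneg _).trans (hbplus 0 i j)) (hF j).le
  obtain ⟨ξ, hξ, hMξ⟩ := hM.exists_pos_mulVec_pos
  have hgap : ∀ i, (P *ᵥ ξ) i < aminus i * ξ i := fun i => by
    simpa [P, sub_mulVec, mulVec_diagonal] using hMξ i
  obtain ⟨A, hA⟩ := haUB
  obtain ⟨ρ, hρ0, hρ1, hrate⟩ := exists_contraction_rate hh a ha_pos hA aminus
    (fun m i => (ha_inf i).1 ⟨m, rfl⟩) ξ _ (fun i => (hξ i).le) hgap τ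
  -- `max _ 2` keeps `C > 1` also for `N = 0`, where `‖ξ‖ = 0`
  refine ⟨-Real.log ρ, neg_pos.2 (Real.log_neg hρ0 hρ1), max (‖ξ‖ * ‖ξ⁻¹‖ * ρ ^ (-τ : ℤ)) 2,
    lt_max_of_lt_right one_lt_two, fun n _ x y hx hy m hm => ?_⟩
  have hθ : ∀ m i, 0 ≤ (1 - Real.exp (-(a m i) * h)) / a m i := fun m i =>
    one_sub_exp_neg_mul_div_nonneg (ha_pos m i) hh.le
  have hdecay := segNorm_le_of_delay_recursion τd hτd (fun m i => Real.exp (-(a m i) * h)) _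
    (fun _ _ => (Real.exp_pos _).le) hθ P hP ξ hξ hρ0 hρ1.le hrate (fun k i => x k i - y k i) n
    (fun m hm i => by
      rw [hx m hm i, hy m hm i]
      exact abs_sub_le_of_lipschitz (Real.exp_pos _).le (hθ m i) _ _ F (hbplus m i) f hfLip
        _ _ _ _ _) hm
  have hexp : Real.exp (-(-Real.log ρ) * ((m : ℝ) - n)) = ρ ^ (m - n) := by
    rw [neg_neg, ← Real.rpow_def_of_pos hρ0, ← Real.rpow_intCast]
    push_cast
    rfl
  refine hdecay.trans ?_
  rw [hexp]
  gcongr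
  · exact segNorm_nonneg _ n
  · exact le_max_left _ _

/-- Global exponential stability of the discretized Hopfield model under the condition
that `M = diag(a_1^-,…,a_N^-) − [b_{ij}^+ F_j]` is an M-matrix. -/
theorem stmt4 {N τ : ℕ} (h : ℝ) (hh : 0 < h)
    (a : ℤ → Fin N → ℝ) (b : ℤ → Fin N → Fin N → ℝ) (I : ℤ → Fin N → ℝ)
    (τd : ℤ → ℕ) (hτd : ∀ m, τd m ≤ τ)
    (f : Fin N → ℝ → ℝ) (F : Fin N → ℝ) (hF : ∀ j, 0 < F j)
    (hfLip : ∀ j u v, |f j u - f j v| ≤ F j * |u - v|)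
    (ha_pos : ∀ m i, 0 < a m i)
    (haUB : ∃ A, ∀ m i, a m i ≤ A)
    (hI : ∃ J, ∀ m i, |I m i| ≤ J)
    (aminus : Fin N → ℝ) (bplus : Fin N → Fin N → ℝ)
    (ha_inf : ∀ i, IsGLB (Set.range fun m => a m i) (aminus i))
    (hb_sup : ∀ i j, IsLUB (Set.range fun m => |b m i j|) (bplus i j))
    (hM : IsMMatrix (Matrix.diagonal aminus - Matrix.of fun i j => bplus i j * F j)) :
    ∃ μ > (0 : ℝ), ∃ C > (1 : ℝ), ∀ n : ℤ, 0 ≤ n → ∀ x y : ℤ → Fin N → ℝ,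
      (∀ m, n ≤ m → ∀ i,
        x (m + 1) i = x m i * Real.exp (-(a m i) * h) +
          ((1 - Real.exp (-(a m i) * h)) / a m i) *
            ((∑ j, b m i j * f j (x (m - τd m) j)) + I m i)) →
      (∀ m, n ≤ m → ∀ i,
        y (m + 1) i = y m i * Real.exp (-(a m i) * h) +
          ((1 - Real.exp (-(a m i) * h)) / a m i) *
            ((∑ j, b m i j * f j (y (m - τd m) j)) + I m i)) →
      ∀ m, n ≤ m →
        segNorm τ (fun k i => x k i - y k i) m ≤
          C * Real.exp (-μ * ((m : ℝ) - n)) * segNorm τ (fun k i => x k i - y k i) n :=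
  stmt4_general h hh a b I τd hτd f F hF hfLip ha_pos haUB aminus bplus ha_inf hb_sup hM
end

section
/- In the setting of the abstract stability theorem for x̄(m+1) = L̄_m x̄_m + f̄_m(x̄_m) with f̄_m(0) = 0, bounds ‖A^(i)_{m,n}‖ ≤ a^(i)_{m,n} ≤ a'_{m,n} and λ < 1: the operator J on the weighted space C_{n,ᾱ}, defined by (Jx̄)_n = ᾱ and (Jx̄)_m = (ξ^(1)_m,…,ξ^(N)_m) with ξ^(i)_m = A^(i)_{m,n} α_i + Σ_{k=n}^{m-1} A^(i)_{m,k+1} Γ f^(i)_k(x̄_k) for m > n, maps C_{n,ᾱ} into itself, satisfies |Jx̄|_C ≤ 1 + λ|x̄|_C, and is a λ-Lipschitz contraction: |Jx̄ − Jȳ|_C ≤ λ|x̄ − ȳ|_C. Consequently J has a unique fixed point x̄* with |x̄*|_C ≤ 1/(1−λ). -/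
/-!
Write `x̄_m` for the stacked segment `segs ρ x m`. Since `A_{n,n} = id`, the formula defining `J`
holds for every `m ≥ n`, so `(Jx̄)_m − (Jȳ)_m` is the sum over `n ≤ k < m` of
`A_{m,k+1} Γ (f_k(x̄_k) − f_k(ȳ_k))`, whose norm is at most
`a_{m,k+1} Lip(f_k) a'_{k,n} ‖ᾱ‖ |x̄ − ȳ|_C`; the definition of `λ` turns this into
`|Jx̄ − Jȳ|_C ≤ λ |x̄ − ȳ|_C`. Comparing `Jx̄` with `J0`, whose segments are `A_{m,n} α`, gives
`|Jx̄|_C ≤ 1 + λ |x̄|_C`.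

The weighted distance controls every value `x(k)` with `k ≥ n − ρ` (the only values it sees), so
the Picard iterates `J^t 0` converge pointwise to some `x̄*`, segmentwise at a geometric rate, with
`|J^t 0 − x̄*|_C = O(λ^t)`. Then `|Jx̄* − x̄*|_C ≤ λ |x̄* − J^t 0|_C + |J^{t+1} 0 − x̄*|_C → 0`, so
`x̄*` is a fixed point. Finally `|x̄*|_C = |Jx̄*|_C ≤ 1 + λ |x̄*|_C`, and uniqueness follows from
the contraction.
-/

/-- The segment at time `m` of a `Y`-valued sequence `u`, as an element of the segment
space `X = Fin (ρ+1) → Y` (index `j` corresponds to the delay offset `j - ρ ∈ [-ρ,0]`). -/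
def seg {Y : Type*} (ρ : ℕ) (u : ℤ → Y) (m : ℤ) : Fin (ρ + 1) → Y :=
  fun j => u (m - ρ + j)

/-- `Γ : Y → X` sends `u` to the segment which is `u` at delay offset `0` and `0` at
negative offsets. -/
def Gam {Y : Type*} [Zero Y] (ρ : ℕ) (u : Y) : Fin (ρ + 1) → Y :=
  fun j => if (j : ℕ) = ρ then u else 0

/-- The set of weighted segment quotients `‖x̄_m − ȳ_m‖/(a'_{m,n}‖ᾱ‖)`, `m ≥ n`. -/
noncomputable def wSet {Y : Type*} [NormedAddCommGroup Y] {N ρ : ℕ}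
    (a' : ℤ → ℤ → ℝ) (n : ℤ) (α : Fin N → Fin (ρ + 1) → Y)
    (x y : ℤ → Fin N → Y) : Set ℝ :=
  {s | ∃ m : ℤ, n ≤ m ∧
    s = ‖(fun i => seg ρ (fun k => x k i - y k i) m : Fin N → Fin (ρ + 1) → Y)‖ /
          (a' m n * ‖α‖)}

/-- The weighted distance `sup_{m ≥ n} ‖x̄_m − ȳ_m‖/(a'_{m,n}‖ᾱ‖)`. -/
noncomputable def wD {Y : Type*} [NormedAddCommGroup Y] {N ρ : ℕ}
    (a' : ℤ → ℤ → ℝ) (n : ℤ) (α : Fin N → Fin (ρ + 1) → Y)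
    (x y : ℤ → Fin N → Y) : ℝ :=
  sSup (wSet a' n α x y)

/-- Membership in the weighted space `C_{n,ᾱ}`: the segment at `n` equals `ᾱ` and the
weighted norm `|x̄|_C = sup_{m≥n} ‖x̄_m‖/(a'_{m,n}‖ᾱ‖)` is finite. -/
def memC {Y : Type*} [NormedAddCommGroup Y] {N ρ : ℕ}
    (a' : ℤ → ℤ → ℝ) (n : ℤ) (α : Fin N → Fin (ρ + 1) → Y)
    (x : ℤ → Fin N → Y) : Prop :=
  (∀ i : Fin N, ∀ j : Fin (ρ + 1), x (n - ρ + j) i = α i j) ∧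
    BddAbove (wSet a' n α x 0)

open Filter Finset

lemma nonneg_of_norm_sub_le_mul {E F : Type*} [NormedAddCommGroup E] [Nontrivial E]
    [SeminormedAddGroup F] {g : E → F} {K : ℝ} (h : ∀ u v, ‖g u - g v‖ ≤ K * ‖u - v‖) :
    0 ≤ K := by
  obtain ⟨u, hu⟩ := exists_ne (0 : E)
  have hK := (norm_nonneg _).trans (h u 0)
  rw [sub_zero] at hK
  exact nonneg_of_mul_nonneg_left hK (norm_pos_iff.2 hu)

section Segments

variable {Y : Type*} {N ρ : ℕ}

/-- The stacked segment `x̄_m = (x^(1)_m, …, x^(N)_m)` of the paper. -/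
def segs (ρ : ℕ) (x : ℤ → Fin N → Y) (m : ℤ) : Fin N → Fin (ρ + 1) → Y :=
  fun i => seg ρ (fun k => x k i) m

lemma segs_zero [Zero Y] (m : ℤ) : segs ρ (0 : ℤ → Fin N → Y) m = 0 := rfl

lemma segs_congr {n m : ℤ} {x x' : ℤ → Fin N → Y}
    (h : ∀ k, n - ρ ≤ k → ∀ i, x k i = x' k i) (hm : n ≤ m) : segs ρ x m = segs ρ x' m := by
  funext i j
  exact h _ (by omega) i

lemma norm_sub_le_norm_segs_sub [SeminormedAddGroup Y] {x y : ℤ → Fin N → Y} {k m : ℤ}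
    (hk : m - ρ ≤ k) (hkm : k ≤ m) (i : Fin N) :
    ‖x k i - y k i‖ ≤ ‖segs ρ x m - segs ρ y m‖ := by
  let j : Fin (ρ + 1) := ⟨(k - (m - ρ)).toNat, by omega⟩
  have hj : m - ρ + (j : ℕ) = k := by simp only [j]; omega
  calc ‖x k i - y k i‖ = ‖(segs ρ x m - segs ρ y m) i j‖ := by simp [segs, seg, hj]
    _ ≤ ‖segs ρ x m - segs ρ y m‖ := (norm_le_pi_norm _ j).trans (norm_le_pi_norm _ i)

lemma norm_Gam_le [SeminormedAddGroup Y] (u : Y) : ‖Gam ρ u‖ ≤ ‖u‖ := by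
  refine (pi_norm_le_iff_of_nonneg (norm_nonneg u)).2 fun j => ?_
  unfold Gam
  split <;> simp

lemma Gam_zero [Zero Y] : Gam ρ (0 : Y) = 0 := by
  funext j
  simp [Gam]

lemma Gam_sub [AddGroup Y] (u v : Y) : Gam ρ (u - v) = Gam ρ u - Gam ρ v := by
  funext j
  by_cases h : (j : ℕ) = ρ <;> simp [Gam, h]

end Segments

section WeightedDistance

variable {Y : Type*} [NormedAddCommGroup Y] {N ρ : ℕ} {a' : ℤ → ℤ → ℝ} {n : ℤ}
  {α : Fin N → Fin (ρ + 1) → Y} {x y z : ℤ → Fin N → Y}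

lemma wSet_eq : wSet a' n α x y =
    {s | ∃ m, n ≤ m ∧ s = ‖segs ρ x m - segs ρ y m‖ / (a' m n * ‖α‖)} := rfl

lemma wSet_comm : wSet a' n α x y = wSet a' n α y x := by
  simp only [wSet_eq, norm_sub_rev (segs ρ x _)]

lemma wD_comm : wD a' n α x y = wD a' n α y x :=
  congrArg sSup wSet_comm

lemma wSet_congr {x' y' : ℤ → Fin N → Y} (hx : ∀ k, n - ρ ≤ k → ∀ i, x k i = x' k i)
    (hy : ∀ k, n - ρ ≤ k → ∀ i, y k i = y' k i) : wSet a' n α x y = wSet a' n α x' y' := by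
  simp only [wSet_eq]
  ext s
  exact exists_congr fun m => and_congr_right fun hm => by
    rw [segs_congr hx hm, segs_congr hy hm]

lemma wD_congr {x' y' : ℤ → Fin N → Y} (hx : ∀ k, n - ρ ≤ k → ∀ i, x k i = x' k i)
    (hy : ∀ k, n - ρ ≤ k → ∀ i, y k i = y' k i) : wD a' n α x y = wD a' n α x' y' :=
  congrArg sSup (wSet_congr hx hy)

lemma norm_segs_sub_le_wD (hw : ∀ m, n ≤ m → 0 < a' m n * ‖α‖)
    (h : BddAbove (wSet a' n α x y)) {m : ℤ} (hm : n ≤ m) :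
    ‖segs ρ x m - segs ρ y m‖ ≤ wD a' n α x y * (a' m n * ‖α‖) :=
  (div_le_iff₀ (hw m hm)).1 (le_csSup h ⟨m, hm, rfl⟩)

lemma wD_nonneg (hw : ∀ m, n ≤ m → 0 < a' m n * ‖α‖) (h : BddAbove (wSet a' n α x y)) :
    0 ≤ wD a' n α x y :=
  (div_nonneg (norm_nonneg _) (hw n le_rfl).le).trans (le_csSup h ⟨n, le_rfl, rfl⟩)

lemma bddAbove_wSet_and_wD_le (hw : ∀ m, n ≤ m → 0 < a' m n * ‖α‖) {c : ℝ}
    (h : ∀ m, n ≤ m → ‖segs ρ x m - segs ρ y m‖ ≤ c * (a' m n * ‖α‖)) :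
    BddAbove (wSet a' n α x y) ∧ wD a' n α x y ≤ c := by
  have hle : ∀ s ∈ wSet a' n α x y, s ≤ c := by
    rintro s ⟨m, hm, rfl⟩
    exact (div_le_iff₀ (hw m hm)).2 (h m hm)
  exact ⟨⟨c, hle⟩, csSup_le ⟨_, n, le_rfl, rfl⟩ hle⟩

lemma bddAbove_wSet_and_wD_le_add (hw : ∀ m, n ≤ m → 0 < a' m n * ‖α‖)
    (hxy : BddAbove (wSet a' n α x y)) (hyz : BddAbove (wSet a' n α y z)) :
    BddAbove (wSet a' n α x z) ∧ wD a' n α x z ≤ wD a' n α x y + wD a' n α y z :=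
  bddAbove_wSet_and_wD_le hw fun m hm => calc
    ‖segs ρ x m - segs ρ z m‖ ≤ ‖segs ρ x m - segs ρ y m‖ + ‖segs ρ y m - segs ρ z m‖ :=
      norm_sub_le_norm_sub_add_norm_sub _ _ _
    _ ≤ (wD a' n α x y + wD a' n α y z) * (a' m n * ‖α‖) := by
      rw [add_mul]
      exact add_le_add (norm_segs_sub_le_wD hw hxy hm) (norm_segs_sub_le_wD hw hyz hm)

lemma bddAbove_wSet_of_bddAbove_wSet_zero (hw : ∀ m, n ≤ m → 0 < a' m n * ‖α‖)
    (hx : BddAbove (wSet a' n α x 0)) (hy : BddAbove (wSet a' n α y 0)) :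
    BddAbove (wSet a' n α x y) :=
  (bddAbove_wSet_and_wD_le_add hw hx (by rwa [wSet_comm] at hy)).1

lemma eq_of_wD_le_zero (hw : ∀ m, n ≤ m → 0 < a' m n * ‖α‖)
    (h : BddAbove (wSet a' n α x y)) (h0 : wD a' n α x y ≤ 0) :
    ∀ k, n - ρ ≤ k → ∀ i, x k i = y k i := by
  intro k hk i
  have hm : n ≤ max k n := le_max_right k n
  rw [← sub_eq_zero, ← norm_le_zero_iff]
  calc ‖x k i - y k i‖ ≤ ‖segs ρ x (max k n) - segs ρ y (max k n)‖ :=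
        norm_sub_le_norm_segs_sub (by omega) (le_max_left k n) i
    _ ≤ wD a' n α x y * (a' (max k n) n * ‖α‖) := norm_segs_sub_le_wD hw h hm
    _ ≤ 0 := mul_nonpos_of_nonpos_of_nonneg h0 (hw _ hm).le

lemma bddAbove_wSet_and_wD_le_one_add (hw : ∀ m, n ≤ m → 0 < a' m n * ‖α‖) {lam : ℝ}
    {J : (ℤ → Fin N → Y) → ℤ → Fin N → Y}
    (hJ : ∀ x y, BddAbove (wSet a' n α x y) →
      BddAbove (wSet a' n α (J x) (J y)) ∧ wD a' n α (J x) (J y) ≤ lam * wD a' n α x y)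
    (hJ0 : BddAbove (wSet a' n α (J 0) 0) ∧ wD a' n α (J 0) 0 ≤ 1)
    (hx : BddAbove (wSet a' n α x 0)) :
    BddAbove (wSet a' n α (J x) 0) ∧ wD a' n α (J x) 0 ≤ 1 + lam * wD a' n α x 0 := by
  obtain ⟨hb, hle⟩ := hJ x 0 hx
  obtain ⟨hb', hle'⟩ := bddAbove_wSet_and_wD_le_add hw hb hJ0.1
  exact ⟨hb', by linarith [hJ0.2]⟩

end WeightedDistance

section Picard

variable {Y : Type*} [NormedAddCommGroup Y] [CompleteSpace Y] {N ρ : ℕ} {n : ℤ}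

lemma exists_segs_sub_le_of_geometric {x : ℕ → ℤ → Fin N → Y} {C : ℤ → ℝ} {r : ℝ} (hr : r < 1)
    (h : ∀ t m, n ≤ m → ‖segs ρ (x (t + 1)) m - segs ρ (x t) m‖ ≤ C m * r ^ t) :
    ∃ xs : ℤ → Fin N → Y,
      ∀ t m, n ≤ m → ‖segs ρ (x t) m - segs ρ xs m‖ ≤ C m * r ^ t / (1 - r) := by
  refine ⟨fun k i => limUnder atTop fun t => x t k i, fun t m hm => ?_⟩
  have hdist : ∀ t, dist (segs ρ (x t) m) (segs ρ (x (t + 1)) m) ≤ C m * r ^ t := fun t => by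
    rw [dist_comm, dist_eq_norm]
    exact h t m hm
  obtain ⟨S, hS⟩ := cauchySeq_tendsto_of_complete (cauchySeq_of_le_geometric r (C m) hr hdist)
  have hlim : segs ρ (fun k i => limUnder atTop fun t => x t k i) m = S := by
    funext i j
    exact (tendsto_pi_nhds.1 (tendsto_pi_nhds.1 hS i) j).limUnder_eq
  rw [hlim, ← dist_eq_norm]
  exact dist_le_of_le_geometric_of_tendsto r (C m) hr hdist hS t

variable {a' : ℤ → ℤ → ℝ} {α : Fin N → Fin (ρ + 1) → Y} {lam : ℝ}
  {J : (ℤ → Fin N → Y) → ℤ → Fin N → Y}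

lemma exists_wD_iterate_le (hw : ∀ m, n ≤ m → 0 < a' m n * ‖α‖) (hlam0 : 0 ≤ lam)
    (hlam1 : lam < 1)
    (hJ : ∀ x y, BddAbove (wSet a' n α x y) →
      BddAbove (wSet a' n α (J x) (J y)) ∧ wD a' n α (J x) (J y) ≤ lam * wD a' n α x y)
    (x₀ : ℤ → Fin N → Y) (h₀ : BddAbove (wSet a' n α (J x₀) x₀)) :
    ∃ xs C, ∀ t, BddAbove (wSet a' n α (J^[t] x₀) xs) ∧ wD a' n α (J^[t] x₀) xs ≤ C * lam ^ t := by
  set C := wD a' n α (J x₀) x₀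
  have hstep : ∀ t, BddAbove (wSet a' n α (J (J^[t] x₀)) (J^[t] x₀)) ∧
      wD a' n α (J (J^[t] x₀)) (J^[t] x₀) ≤ C * lam ^ t := by
    intro t
    induction t with
    | zero => exact ⟨h₀, by simp [C]⟩
    | succ t ih =>
      rw [Function.iterate_succ_apply']
      obtain ⟨hb, hle⟩ := hJ _ _ ih.1
      refine ⟨hb, hle.trans ?_⟩
      rw [pow_succ, mul_comm lam, ← mul_assoc]
      exact mul_le_mul_of_nonneg_right ih.2 hlam0
  obtain ⟨xs, hxs⟩ := exists_segs_sub_le_of_geometric (x := fun t => J^[t] x₀)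
    (C := fun m => C * (a' m n * ‖α‖)) hlam1 fun t m hm => by
      rw [Function.iterate_succ_apply']
      exact (norm_segs_sub_le_wD hw (hstep t).1 hm).trans <| by
        rw [mul_right_comm]
        exact mul_le_mul_of_nonneg_right (hstep t).2 (hw m hm).le
  exact ⟨xs, C / (1 - lam), fun t =>
    bddAbove_wSet_and_wD_le hw fun m hm => (hxs t m hm).trans_eq (by ring)⟩

theorem exists_fixedPoint_of_wD_contraction (hw : ∀ m, n ≤ m → 0 < a' m n * ‖α‖)
    (hlam0 : 0 ≤ lam) (hlam1 : lam < 1)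
    (hJ : ∀ x y, BddAbove (wSet a' n α x y) →
      BddAbove (wSet a' n α (J x) (J y)) ∧ wD a' n α (J x) (J y) ≤ lam * wD a' n α x y)
    (x₀ : ℤ → Fin N → Y) (h₀ : BddAbove (wSet a' n α (J x₀) x₀)) :
    ∃ xs, BddAbove (wSet a' n α xs x₀) ∧ ∀ k, n - ρ ≤ k → ∀ i, J xs k i = xs k i := by
  obtain ⟨xs, C, hC⟩ := exists_wD_iterate_le hw hlam0 hlam1 hJ x₀ h₀
  have hbdd : ∀ t, BddAbove (wSet a' n α xs (J^[t] x₀)) := fun t => by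
    rw [wSet_comm]
    exact (hC t).1
  have hfix : ∀ t, BddAbove (wSet a' n α (J xs) xs) ∧
      wD a' n α (J xs) xs ≤ 2 * C * lam * lam ^ t := by
    intro t
    obtain ⟨hb₁, hle₁⟩ := hJ _ _ (hbdd t)
    obtain ⟨hb₂, hle₂⟩ := hC (t + 1)
    rw [Function.iterate_succ_apply'] at hb₂ hle₂
    obtain ⟨hb, hle⟩ := bddAbove_wSet_and_wD_le_add hw hb₁ hb₂
    have hrev : wD a' n α xs (J^[t] x₀) ≤ C * lam ^ t := by
      rw [wD_comm]
      exact (hC t).2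
    refine ⟨hb, ?_⟩
    calc wD a' n α (J xs) xs ≤ lam * wD a' n α xs (J^[t] x₀) + C * lam ^ (t + 1) :=
          hle.trans (add_le_add hle₁ hle₂)
      _ ≤ lam * (C * lam ^ t) + C * lam ^ (t + 1) := by gcongr
      _ = 2 * C * lam * lam ^ t := by ring
  refine ⟨xs, hbdd 0, eq_of_wD_le_zero hw (hfix 0).1 ?_⟩
  have hlim := (tendsto_pow_atTop_nhds_zero_of_lt_one hlam0 hlam1).const_mul (2 * C * lam)
  simpa using ge_of_tendsto' hlim fun t => (hfix t).2

end Picard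

section Duhamel

variable {Y : Type*} [NormedAddCommGroup Y] [NormedSpace ℝ Y] {N ρ : ℕ}

/-- The sum `Σ_{k=n}^{m-1} A^(i)_{m,k+1} Γ f^(i)_k(x̄_k)` in the definition of `J`. -/
noncomputable def duhamelSum (A : ℤ → ℤ → Fin N → ((Fin (ρ + 1) → Y) →L[ℝ] (Fin (ρ + 1) → Y)))
    (f : ℤ → (Fin N → Fin (ρ + 1) → Y) → Fin N → Y) (n m : ℤ) (i : Fin N)
    (x : ℤ → Fin N → Y) : Fin (ρ + 1) → Y :=
  ∑ k ∈ Ico n m, A m (k + 1) i (Gam ρ (f k (segs ρ x k) i))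

variable {A : ℤ → ℤ → Fin N → ((Fin (ρ + 1) → Y) →L[ℝ] (Fin (ρ + 1) → Y))}
  {f : ℤ → (Fin N → Fin (ρ + 1) → Y) → Fin N → Y} {Lf : ℤ → Fin N → ℝ}
  {aa : ℤ → ℤ → Fin N → ℝ} {a' : ℤ → ℤ → ℝ} {lam : ℝ} {n m : ℤ} {i : Fin N}

lemma duhamelSum_zero (hf0 : ∀ k i, f k 0 i = 0) : duhamelSum A f n m i 0 = 0 := by
  simp [duhamelSum, segs_zero, hf0, Gam_zero]

lemma norm_duhamelSum_sub_le (haA : ∀ m n : ℤ, ∀ i, n ≤ m → ‖A m n i‖ ≤ aa m n i)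
    (hfLip : ∀ m i u v, ‖f m u i - f m v i‖ ≤ Lf m i * ‖u - v‖) (hLf0 : ∀ k i, 0 ≤ Lf k i)
    (ha'pos : ∀ m n : ℤ, n ≤ m → 0 < a' m n)
    (hlam : ∀ i : Fin N, ∀ m n : ℤ, n ≤ m →
      (1 / a' m n) * ∑ k ∈ Finset.Ico n m, aa m (k + 1) i * Lf k i * a' k n ≤ lam)
    {x y : ℤ → Fin N → Y} {c : ℝ} (hc : 0 ≤ c)
    (hxy : ∀ k, n ≤ k → ‖segs ρ x k - segs ρ y k‖ ≤ c * a' k n) (hm : n ≤ m) :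
    ‖duhamelSum A f n m i x - duhamelSum A f n m i y‖ ≤ lam * c * a' m n := by
  have hsum : ∑ k ∈ Ico n m, aa m (k + 1) i * Lf k i * a' k n ≤ a' m n * lam := by
    have h := hlam i m n hm
    rwa [one_div, inv_mul_le_iff₀ (ha'pos m n hm)] at h
  have hterm : ∀ k ∈ Ico n m,
      ‖A m (k + 1) i (Gam ρ (f k (segs ρ x k) i - f k (segs ρ y k) i))‖ ≤
        c * (aa m (k + 1) i * Lf k i * a' k n) := fun k hk => by
    obtain ⟨hnk, hkm⟩ := mem_Ico.1 hk
    have hA := haA m (k + 1) i hkm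
    calc _ ≤ ‖A m (k + 1) i‖ * ‖Gam ρ (f k (segs ρ x k) i - f k (segs ρ y k) i)‖ :=
          (A m (k + 1) i).le_opNorm _
      _ ≤ aa m (k + 1) i * (Lf k i * (c * a' k n)) := by
          gcongr
          · exact (norm_nonneg _).trans hA
          · exact (norm_Gam_le _).trans ((hfLip k i _ _).trans
              (mul_le_mul_of_nonneg_left (hxy k hnk) (hLf0 k i)))
      _ = c * (aa m (k + 1) i * Lf k i * a' k n) := by ring
  calc ‖duhamelSum A f n m i x - duhamelSum A f n m i y‖
      = ‖∑ k ∈ Ico n m, A m (k + 1) i (Gam ρ (f k (segs ρ x k) i - f k (segs ρ y k) i))‖ := by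
        simp only [duhamelSum, ← sum_sub_distrib, ← map_sub, Gam_sub]
    _ ≤ c * ∑ k ∈ Ico n m, aa m (k + 1) i * Lf k i * a' k n := by
        rw [mul_sum]
        exact norm_sum_le_of_le _ hterm
    _ ≤ c * (a' m n * lam) := mul_le_mul_of_nonneg_left hsum hc
    _ = lam * c * a' m n := by ring

end Duhamel

section Operator

variable {Y : Type*} [NormedAddCommGroup Y] [NormedSpace ℝ Y] {N ρ : ℕ}
  {A : ℤ → ℤ → Fin N → ((Fin (ρ + 1) → Y) →L[ℝ] (Fin (ρ + 1) → Y))}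
  {f : ℤ → (Fin N → Fin (ρ + 1) → Y) → Fin N → Y} {Lf : ℤ → Fin N → ℝ}
  {aa : ℤ → ℤ → Fin N → ℝ} {a' : ℤ → ℤ → ℝ} {lam : ℝ} {n : ℤ}
  {α : Fin N → Fin (ρ + 1) → Y} {J : (ℤ → Fin N → Y) → ℤ → Fin N → Y}

lemma segs_J_eq (hAn : ∀ i β, A n n i β = β)
    (hJn : ∀ x : ℤ → Fin N → Y, ∀ i : Fin N, ∀ j : Fin (ρ + 1), J x (n - ρ + j) i = α i j)
    (hJm : ∀ x : ℤ → Fin N → Y, ∀ m : ℤ, n < m → ∀ i,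
      seg ρ (fun k => J x k i) m =
        A m n i (α i) +
          ∑ k ∈ Finset.Ico n m,
            A m (k + 1) i (Gam ρ (f k (fun i' => seg ρ (fun k' => x k' i') k) i)))
    (x : ℤ → Fin N → Y) {m : ℤ} (hm : n ≤ m) (i : Fin N) :
    segs ρ (J x) m i = A m n i (α i) + duhamelSum A f n m i x := by
  rcases hm.eq_or_lt with rfl | hlt
  · rw [hAn, duhamelSum, Ico_self, sum_empty, add_zero]
    exact funext (hJn x i)
  · exact hJm x m hlt i

lemma norm_segs_J_sub_le
    (hJ : ∀ x m, n ≤ m → ∀ i, segs ρ (J x) m i = A m n i (α i) + duhamelSum A f n m i x)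
    (haA : ∀ m n : ℤ, ∀ i, n ≤ m → ‖A m n i‖ ≤ aa m n i)
    (hfLip : ∀ m i u v, ‖f m u i - f m v i‖ ≤ Lf m i * ‖u - v‖) (hLf0 : ∀ k i, 0 ≤ Lf k i)
    (ha'pos : ∀ m n : ℤ, n ≤ m → 0 < a' m n) (hlam0 : 0 ≤ lam)
    (hlam : ∀ i : Fin N, ∀ m n : ℤ, n ≤ m →
      (1 / a' m n) * ∑ k ∈ Finset.Ico n m, aa m (k + 1) i * Lf k i * a' k n ≤ lam)
    {x y : ℤ → Fin N → Y} {c : ℝ} (hc : 0 ≤ c)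
    (hxy : ∀ k, n ≤ k → ‖segs ρ x k - segs ρ y k‖ ≤ c * a' k n) {m : ℤ} (hm : n ≤ m) :
    ‖segs ρ (J x) m - segs ρ (J y) m‖ ≤ lam * c * a' m n := by
  refine (pi_norm_le_iff_of_nonneg (by have := ha'pos m n hm; positivity)).2 fun i => ?_
  rw [Pi.sub_apply, hJ x m hm i, hJ y m hm i, add_sub_add_left_eq_sub]
  exact norm_duhamelSum_sub_le haA hfLip hLf0 ha'pos hlam hc hxy hm

lemma wD_J_le (hw : ∀ m, n ≤ m → 0 < a' m n * ‖α‖)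
    (hJ : ∀ x m, n ≤ m → ∀ i, segs ρ (J x) m i = A m n i (α i) + duhamelSum A f n m i x)
    (haA : ∀ m n : ℤ, ∀ i, n ≤ m → ‖A m n i‖ ≤ aa m n i)
    (hfLip : ∀ m i u v, ‖f m u i - f m v i‖ ≤ Lf m i * ‖u - v‖) (hLf0 : ∀ k i, 0 ≤ Lf k i)
    (ha'pos : ∀ m n : ℤ, n ≤ m → 0 < a' m n) (hlam0 : 0 ≤ lam)
    (hlam : ∀ i : Fin N, ∀ m n : ℤ, n ≤ m →
      (1 / a' m n) * ∑ k ∈ Finset.Ico n m, aa m (k + 1) i * Lf k i * a' k n ≤ lam)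
    {x y : ℤ → Fin N → Y} (hxy : BddAbove (wSet a' n α x y)) :
    BddAbove (wSet a' n α (J x) (J y)) ∧ wD a' n α (J x) (J y) ≤ lam * wD a' n α x y := by
  have hc : 0 ≤ wD a' n α x y * ‖α‖ := mul_nonneg (wD_nonneg hw hxy) (norm_nonneg α)
  refine bddAbove_wSet_and_wD_le hw fun m hm => ?_
  refine (norm_segs_J_sub_le hJ haA hfLip hLf0 ha'pos hlam0 hlam hc (fun k hk => ?_) hm).trans_eq
    (by ring)
  exact (norm_segs_sub_le_wD hw hxy hk).trans_eq (by ring)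

lemma bddAbove_wSet_J_zero_and_wD_le_one (hw : ∀ m, n ≤ m → 0 < a' m n * ‖α‖)
    (hJ : ∀ x m, n ≤ m → ∀ i, segs ρ (J x) m i = A m n i (α i) + duhamelSum A f n m i x)
    (hf0 : ∀ m i, f m 0 i = 0) (haA : ∀ m n : ℤ, ∀ i, n ≤ m → ‖A m n i‖ ≤ aa m n i)
    (haa' : ∀ m n : ℤ, ∀ i, n ≤ m → aa m n i ≤ a' m n) :
    BddAbove (wSet a' n α (J 0) 0) ∧ wD a' n α (J 0) 0 ≤ 1 := by
  refine bddAbove_wSet_and_wD_le hw fun m hm => ?_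
  rw [segs_zero, sub_zero, one_mul]
  refine (pi_norm_le_iff_of_nonneg (hw m hm).le).2 fun i => ?_
  have ha' : ‖A m n i‖ ≤ a' m n := (haA m n i hm).trans (haa' m n i hm)
  rw [hJ 0 m hm i, duhamelSum_zero hf0, add_zero]
  exact (A m n i).le_opNorm _ |>.trans <|
    mul_le_mul ha' (norm_le_pi_norm α i) (norm_nonneg _) ((norm_nonneg _).trans ha')

end Operator

/-- In the setting of the abstract stability theorem (bounds
`‖A^(i)_{m,n}‖ ≤ a^(i)_{m,n} ≤ a'_{m,n}`, `f̄_m(0) = 0`, `λ < 1`), the operator `J`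
defined by `(Jx̄)_n = ᾱ` and
`(Jx̄)_m^{(i)} = A^(i)_{m,n} α_i + Σ_{k=n}^{m-1} A^(i)_{m,k+1} Γ f^(i)_k(x̄_k)` for
`m > n` maps `C_{n,ᾱ}` into itself with `|Jx̄|_C ≤ 1 + λ|x̄|_C`, is a `λ`-contraction,
and hence has a unique fixed point `x̄*` with `|x̄*|_C ≤ 1/(1−λ)`. -/
theorem stmt10 {Y : Type*} [NormedAddCommGroup Y] [NormedSpace ℝ Y] [CompleteSpace Y]
    {N ρ : ℕ}
    (L : ℤ → Fin N → ((Fin (ρ + 1) → Y) →L[ℝ] Y))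
    (f : ℤ → (Fin N → Fin (ρ + 1) → Y) → (Fin N → Y))
    (Lf : ℤ → Fin N → ℝ)
    (hf0 : ∀ m i, f m 0 i = 0)
    (hfLip : ∀ m i u v, ‖f m u i - f m v i‖ ≤ Lf m i * ‖u - v‖)
    (A : ℤ → ℤ → Fin N → ((Fin (ρ + 1) → Y) →L[ℝ] (Fin (ρ + 1) → Y)))
    (hA : ∀ i : Fin N, ∀ n : ℤ, ∀ α : Fin (ρ + 1) → Y, ∃ v : ℤ → Y,
      (∀ j : Fin (ρ + 1), v (n - ρ + j) = α j) ∧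
      (∀ m, n ≤ m → v (m + 1) = L m i (seg ρ v m)) ∧
      (∀ m, n ≤ m → A m n i α = seg ρ v m))
    (aa : ℤ → ℤ → Fin N → ℝ) (a' : ℤ → ℤ → ℝ)
    (haA : ∀ m n : ℤ, ∀ i, n ≤ m → ‖A m n i‖ ≤ aa m n i)
    (haa' : ∀ m n : ℤ, ∀ i, n ≤ m → aa m n i ≤ a' m n)
    (ha'pos : ∀ m n : ℤ, n ≤ m → 0 < a' m n)
    (lam : ℝ) (hlam0 : 0 ≤ lam) (hlam1 : lam < 1)
    (hlam : ∀ i : Fin N, ∀ m n : ℤ, n ≤ m →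
      (1 / a' m n) * ∑ k ∈ Finset.Ico n m, aa m (k + 1) i * Lf k i * a' k n ≤ lam)
    (n : ℤ) (α : Fin N → Fin (ρ + 1) → Y) (hα : α ≠ 0)
    (J : (ℤ → Fin N → Y) → (ℤ → Fin N → Y))
    (hJn : ∀ x : ℤ → Fin N → Y, ∀ i : Fin N, ∀ j : Fin (ρ + 1),
      J x (n - ρ + j) i = α i j)
    (hJm : ∀ x : ℤ → Fin N → Y, ∀ m : ℤ, n < m → ∀ i,
      seg ρ (fun k => J x k i) m =
        A m n i (α i) +
          ∑ k ∈ Finset.Ico n m,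
            A m (k + 1) i (Gam ρ (f k (fun i' => seg ρ (fun k' => x k' i') k) i))) :
    -- J maps C_{n,ᾱ} into itself and |Jx̄|_C ≤ 1 + λ|x̄|_C
    (∀ x, memC a' n α x →
      memC a' n α (J x) ∧ wD a' n α (J x) 0 ≤ 1 + lam * wD a' n α x 0) ∧
    -- J is a λ-contraction: |Jx̄ − Jȳ|_C ≤ λ|x̄ − ȳ|_C
    (∀ x y, memC a' n α x → memC a' n α y →
      wD a' n α (J x) (J y) ≤ lam * wD a' n α x y) ∧
    -- J has a unique fixed point x̄* in C_{n,ᾱ}, and |x̄*|_C ≤ 1/(1−λ)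
    (∃ xs, memC a' n α xs ∧ (∀ k : ℤ, n - ρ ≤ k → ∀ i, J xs k i = xs k i) ∧
      wD a' n α xs 0 ≤ 1 / (1 - lam) ∧
      ∀ z, memC a' n α z → (∀ k : ℤ, n - ρ ≤ k → ∀ i, J z k i = z k i) →
        ∀ k : ℤ, n - ρ ≤ k → ∀ i, z k i = xs k i) := by
  have hw : ∀ m, n ≤ m → 0 < a' m n * ‖α‖ := fun m hm =>
    mul_pos (ha'pos m n hm) (norm_pos_iff.2 hα)
  have : Nontrivial (Fin N → Fin (ρ + 1) → Y) := nontrivial_of_ne α 0 hα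
  have hLf0 : ∀ k i, 0 ≤ Lf k i := fun k i => nonneg_of_norm_sub_le_mul (hfLip k i)
  have hAn : ∀ i β, A n n i β = β := fun i β => by
    obtain ⟨v, hv, -, hAv⟩ := hA i n β
    exact (hAv n le_rfl).trans (funext hv)
  have hJ := segs_J_eq hAn hJn hJm
  have hcontr := fun x y => wD_J_le (x := x) (y := y) hw hJ haA hfLip hLf0 ha'pos hlam0 hlam
  have hJ0 := bddAbove_wSet_J_zero_and_wD_le_one hw hJ hf0 haA haa'
  have hmaps := fun x => bddAbove_wSet_and_wD_le_one_add (x := x) hw hcontr hJ0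
  obtain ⟨xs, hxs, hfix⟩ := exists_fixedPoint_of_wD_contraction hw hlam0 hlam1 hcontr 0 hJ0.1
  refine ⟨fun x hx => ⟨⟨hJn x, (hmaps x hx.2).1⟩, (hmaps x hx.2).2⟩,
    fun x y hx hy => (hcontr x y (bddAbove_wSet_of_bddAbove_wSet_zero hw hx.2 hy.2)).2,
    xs, ⟨fun i j => (hfix _ (by omega) i).symm.trans (hJn xs i j), hxs⟩, hfix, ?_,
    fun z hz hzfix => ?_⟩
  · have h := (hmaps xs hxs).2
    rw [wD_congr hfix fun _ _ _ => rfl] at h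
    rw [le_div_iff₀ (sub_pos.2 hlam1)]
    linarith
  · have hb := bddAbove_wSet_of_bddAbove_wSet_zero hw hz.2 hxs
    have h := (hcontr z xs hb).2
    rw [wD_congr hzfix hfix] at h
    exact eq_of_wD_le_zero hw hb (by nlinarith [wD_nonneg hw hb])
end
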